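/- arXiv:2406.04297 — 5 statements merged into one kernel-verified Lean document; each statement's English description precedes it below -/
import Mathlib

section
/- Let B be a complex C*-algebra, σ a *-automorphism of B, and D ⊆ B a norm-closed *-subalgebra satisfying D·σ(D) = σ(D). Then for all integers k ≤ ℓ and i ≤ j and all x ∈ D_{k,ℓ}, y ∈ D_{i,j}, the product xy lies in D_{max(k,i),max(ℓ,j)}. -/
noncomputable section

variable {B : Type*} [NonUnitalCStarAlgebra B]

noncomputable instance : Group (B ≃⋆ₐ[ℂ] B) where
  mul f g := g.trans f
  one := StarAlgEquiv.refl ℂ B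
  inv := StarAlgEquiv.symm
  mul_assoc f g h := rfl
  one_mul f := rfl
  mul_one f := rfl
  inv_mul_cancel f := by ext x; exact f.symm_apply_apply x

/-- The norm-closed linear span of `{x * y : x ∈ X, y ∈ Y}`. -/
def mulSpan (X Y : Set B) : Set B :=
  closure ↑(Submodule.span ℂ {z : B | ∃ x ∈ X, ∃ y ∈ Y, z = x * y})

/-- `D_{k,ℓ}`: sums `x_{k-1} + ⋯ + x_{ℓ-1}` with `x_j ∈ σ^j(D)`. -/
def Dfin (σ : B ≃⋆ₐ[ℂ] B) (D : Set B) (k ℓ : ℤ) : Set B :=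
  {x | ∃ f : ℤ → B, (∀ j ∈ Finset.Icc (k-1) (ℓ-1), f j ∈ ⇑(σ ^ j) '' D) ∧
      x = ∑ j ∈ Finset.Icc (k-1) (ℓ-1), f j}

/-- `D_{k,∞}`. -/
def DInfR (σ : B ≃⋆ₐ[ℂ] B) (D : Set B) (k : ℤ) : Set B :=
  closure (⋃ n : ℕ, Dfin σ D k (k + n))

/-- `D_{-∞,k}`. -/
def DInfL (σ : B ≃⋆ₐ[ℂ] B) (D : Set B) (k : ℤ) : Set B :=
  closure (⋃ n : ℕ, Dfin σ D (k - n) k)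

/-- `D_σ`. -/
def Dsig (σ : B ≃⋆ₐ[ℂ] B) (D : Set B) : Set B :=
  closure (⋃ n : ℕ, Dfin σ D (-(n:ℤ)) n)

/-- Norm-closed *-subalgebra, as a predicate on subsets. -/
def IsCStarSubset (S : Set B) : Prop :=
  IsClosed S ∧ (0:B) ∈ S ∧ (∀ x ∈ S, ∀ y ∈ S, x + y ∈ S) ∧
    (∀ (c : ℂ), ∀ x ∈ S, c • x ∈ S) ∧ (∀ x ∈ S, ∀ y ∈ S, x * y ∈ S) ∧
    (∀ x ∈ S, star x ∈ S)

/-- Harnisch–Kirchberg system. -/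
def IsHKSystem (σ : B ≃⋆ₐ[ℂ] B) (D : Set B) : Prop :=
  IsCStarSubset D ∧
  mulSpan D (⇑σ '' D) = ⇑σ '' D ∧
  D ∩ ⇑σ '' D = {0} ∧
  (∀ d ∈ D, (∀ e ∈ D, d * σ e = 0 ∧ σ e * d = 0) → d = 0)

/-- Closed two-sided ideal `I` of a C*-subalgebra `C` (both given as subsets). -/
def IsClosedIdealIn (C I : Set B) : Prop :=
  I ⊆ C ∧ IsClosed I ∧ (0:B) ∈ I ∧ (∀ x ∈ I, ∀ y ∈ I, x + y ∈ I) ∧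
    (∀ (c : ℂ), ∀ x ∈ I, c • x ∈ I) ∧ (∀ c ∈ C, ∀ j ∈ I, c * j ∈ I ∧ j * c ∈ I)

/-- Essential closed two-sided ideal. -/
def IsEssentialIdealIn (C I : Set B) : Prop :=
  IsClosedIdealIn C I ∧ ∀ x ∈ C, (∀ j ∈ I, x * j = 0 ∧ j * x = 0) → x = 0

/-!
The key fact is `D·σⁿ(D) ⊆ σⁿ(D)` for `n ≥ 0`, by induction on `n`. For `d ∈ D`, the `b` with
`d·σⁿ(b) ∈ σⁿ⁺¹(D)` form a closed subspace; it contains the generators `d'·σ(e)` of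
`D·σ(D) = σ(D)`, since `d·σⁿ(d') ∈ σⁿ(D)` by induction and `σⁿ(D)·σⁿ⁺¹(D) = σⁿ(D·σ(D)) ⊆ σⁿ⁺¹(D)`.
Transporting along `σᵖ` gives `σᵖ(D)·σ^q(D) ⊆ σ^q(D)` for `p ≤ q`, and taking adjoints the case
`p ≥ q`. Expanding `x * y` into products of components and grouping them by the larger level
proves the theorem.
-/

open Finset

lemma zpow_add_apply (σ : B ≃⋆ₐ[ℂ] B) (a b : ℤ) (x : B) :
    (σ ^ (a + b)) x = (σ ^ a) ((σ ^ b) x) := by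
  rw [zpow_add]
  rfl

lemma isometry_zpow (σ : B ≃⋆ₐ[ℂ] B) (n : ℤ) : Isometry (σ ^ n) :=
  NonUnitalStarAlgHom.isometry (σ ^ n) (σ ^ n).injective

lemma mul_mem_mulSpan {X Y : Set B} {x y : B} (hx : x ∈ X) (hy : y ∈ Y) :
    x * y ∈ mulSpan X Y :=
  subset_closure (Submodule.subset_span ⟨x, hx, y, hy, rfl⟩)

lemma mulSpan_subset {X Y : Set B} {W : Submodule ℂ B} (hW : IsClosed (W : Set B))
    (h : ∀ x ∈ X, ∀ y ∈ Y, x * y ∈ W) : mulSpan X Y ⊆ W :=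
  closure_minimal (Submodule.span_le.2 (by rintro _ ⟨x, hx, y, hy, rfl⟩; exact h x hx y hy)) hW

section

variable {σ : B ≃⋆ₐ[ℂ] B} {D : NonUnitalStarSubalgebra ℂ B}

lemma mem_image_zpow_iff_mem_map {n : ℤ} {x : B} :
    x ∈ ⇑(σ ^ n) '' (D : Set B) ↔ x ∈ D.map (σ ^ n) := by
  rw [← NonUnitalStarSubalgebra.coe_map, SetLike.mem_coe]

lemma isClosed_image_zpow (hD : IsClosed (D : Set B)) (n : ℤ) :
    IsClosed (⇑(σ ^ n) '' (D : Set B)) :=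
  (isometry_zpow σ n).isClosedEmbedding.isClosedMap _ hD

lemma star_mem_image_zpow {n : ℤ} {a : B} (ha : a ∈ ⇑(σ ^ n) '' (D : Set B)) :
    star a ∈ ⇑(σ ^ n) '' (D : Set B) := by
  obtain ⟨d, hd, rfl⟩ := ha
  exact ⟨star d, star_mem hd, map_star _ _⟩

lemma mul_mem_image_zpow (hD : IsClosed (D : Set B))
    (hmod : mulSpan (D : Set B) (⇑σ '' (D : Set B)) = ⇑σ '' (D : Set B))
    {n : ℤ} (hn : 0 ≤ n) {d c : B} (hd : d ∈ D) (hc : c ∈ ⇑(σ ^ n) '' (D : Set B)) :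
    d * c ∈ ⇑(σ ^ n) '' (D : Set B) := by
  induction n, hn using Int.leInduction generalizing d c with
  | base =>
    obtain ⟨e, he, rfl⟩ := hc
    exact ⟨d * e, mul_mem hd he, by simp only [zpow_zero]; rfl⟩
  | succ n _ ih =>
    obtain ⟨e, he, rfl⟩ := hc
    let W : Submodule ℂ B :=
      (D.toNonUnitalSubalgebra.toSubmodule.map ((σ ^ (n + 1) : B ≃⋆ₐ[ℂ] B) : B →ₗ[ℂ] B)).comap
        ((LinearMap.mulLeft ℂ d).comp ((σ ^ n : B ≃⋆ₐ[ℂ] B) : B →ₗ[ℂ] B))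
    have hW : (W : Set B) = (fun b => d * (σ ^ n) b) ⁻¹' (⇑(σ ^ (n + 1)) '' (D : Set B)) := rfl
    have hW_closed : IsClosed (W : Set B) :=
      hW ▸ (isClosed_image_zpow hD (n + 1)).preimage
        (continuous_const.mul (isometry_zpow σ n).continuous)
    have hgen : ∀ x ∈ (D : Set B), ∀ y ∈ ⇑σ '' (D : Set B), x * y ∈ W := by
      rintro x hx _ ⟨e', he', rfl⟩
      obtain ⟨x', hx', hxx'⟩ := ih hd ⟨x, hx, rfl⟩
      obtain ⟨e'', he'', hee''⟩ : x' * σ e' ∈ ⇑σ '' (D : Set B) :=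
        hmod ▸ mul_mem_mulSpan hx' ⟨e', he', rfl⟩
      rw [← SetLike.mem_coe, hW]
      refine ⟨e'', he'', ?_⟩
      change (σ ^ (n + 1)) e'' = d * (σ ^ n) (x * σ e')
      rw [map_mul, ← mul_assoc, ← hxx', ← map_mul, zpow_add_apply, zpow_one, hee'']
    have hσe : σ e ∈ W := mulSpan_subset hW_closed hgen (hmod.symm ▸ ⟨e, he, rfl⟩)
    rw [← SetLike.mem_coe, hW] at hσe
    rwa [zpow_add_apply, zpow_one]

lemma mul_mem_image_zpow_of_le (hD : IsClosed (D : Set B))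
    (hmod : mulSpan (D : Set B) (⇑σ '' (D : Set B)) = ⇑σ '' (D : Set B))
    {p q : ℤ} (hpq : p ≤ q) {a b : B} (ha : a ∈ ⇑(σ ^ p) '' (D : Set B))
    (hb : b ∈ ⇑(σ ^ q) '' (D : Set B)) :
    a * b ∈ ⇑(σ ^ q) '' (D : Set B) := by
  obtain ⟨d, hd, rfl⟩ := ha
  obtain ⟨e, he, rfl⟩ := hb
  obtain ⟨f, hf, hdf⟩ := mul_mem_image_zpow hD hmod (sub_nonneg.2 hpq) hd ⟨e, he, rfl⟩
  refine ⟨f, hf, ?_⟩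
  rw [← add_sub_cancel p q, zpow_add_apply, zpow_add_apply, hdf, map_mul]

lemma mul_mem_image_zpow_max (hD : IsClosed (D : Set B))
    (hmod : mulSpan (D : Set B) (⇑σ '' (D : Set B)) = ⇑σ '' (D : Set B))
    {p q : ℤ} {a b : B} (ha : a ∈ ⇑(σ ^ p) '' (D : Set B)) (hb : b ∈ ⇑(σ ^ q) '' (D : Set B)) :
    a * b ∈ ⇑(σ ^ max p q) '' (D : Set B) := by
  rcases le_total p q with hpq | hqp
  · rw [max_eq_right hpq]
    exact mul_mem_image_zpow_of_le hD hmod hpq ha hb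
  · rw [max_eq_left hqp, ← star_star (a * b), star_mul]
    exact star_mem_image_zpow
      (mul_mem_image_zpow_of_le hD hmod hqp (star_mem_image_zpow hb) (star_mem_image_zpow ha))

lemma sum_mem_Dfin {ι : Type*} {k ℓ : ℤ} (s : Finset ι) (level : ι → ℤ) (t : ι → B)
    (hlevel : ∀ a ∈ s, level a ∈ Icc (k - 1) (ℓ - 1))
    (ht : ∀ a ∈ s, t a ∈ ⇑(σ ^ level a) '' (D : Set B)) :
    ∑ a ∈ s, t a ∈ Dfin σ (D : Set B) k ℓ := by
  refine ⟨fun r => ∑ a ∈ s with level a = r, t a, fun r _ => ?_,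
    (sum_fiberwise_of_maps_to hlevel t).symm⟩
  rw [mem_image_zpow_iff_mem_map]
  refine sum_mem fun a ha => ?_
  rw [← (mem_filter.1 ha).2, ← mem_image_zpow_iff_mem_map]
  exact ht a (mem_filter.1 ha).1

end

theorem stmt_2_general (σ : B ≃⋆ₐ[ℂ] B) (D : NonUnitalStarSubalgebra ℂ B)
    (hD : IsClosed (D : Set B))
    (hmod : mulSpan (D : Set B) (⇑σ '' (D : Set B)) = ⇑σ '' (D : Set B))
    (k ℓ i j : ℤ) (x y : B)
    (hx : x ∈ Dfin σ (D : Set B) k ℓ) (hy : y ∈ Dfin σ (D : Set B) i j) :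
    x * y ∈ Dfin σ (D : Set B) (max k i) (max ℓ j) := by
  obtain ⟨f, hf, rfl⟩ := hx
  obtain ⟨g, hg, rfl⟩ := hy
  rw [sum_mul_sum, ← sum_product']
  refine sum_mem_Dfin _ (fun pq => max pq.1 pq.2) _ ?_ ?_
  · intro pq hpq
    simp only [mem_product, mem_Icc] at hpq ⊢
    omega
  · intro pq hpq
    rw [mem_product] at hpq
    exact mul_mem_image_zpow_max hD hmod (hf _ hpq.1) (hg _ hpq.2)

/-- if `D·σ(D) = σ(D)` then `D_{k,ℓ} · D_{i,j} ⊆ D_{max(k,i),max(ℓ,j)}`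
elementwise. -/
theorem stmt_2 (σ : B ≃⋆ₐ[ℂ] B) (D : NonUnitalStarSubalgebra ℂ B)
    (hD : IsClosed (D : Set B))
    (hmod : mulSpan (D : Set B) (⇑σ '' (D : Set B)) = ⇑σ '' (D : Set B))
    (k ℓ i j : ℤ) (hkℓ : k ≤ ℓ) (hij : i ≤ j) (x y : B)
    (hx : x ∈ Dfin σ (D : Set B) k ℓ) (hy : y ∈ Dfin σ (D : Set B) i j) :
    x * y ∈ Dfin σ (D : Set B) (max k i) (max ℓ j) :=
  stmt_2_general σ D hD hmod k ℓ i j x y hx hy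

end
end

section
/- Let B be a complex C*-algebra, σ a *-automorphism of B, and D ⊆ B a norm-closed *-subalgebra. Then D·σ(D) = σ(D) holds if and only if D·σ^n(D) = σ^n(D) holds for every integer n ≥ 1. -/
noncomputable section

variable {B : Type*} [NonUnitalCStarAlgebra B]

/-! Since `σ` is an isometric algebra automorphism, `σ(X·Y) = σ(X)·σ(Y)`, and the product of closed
spans is associative: `X·(Y·Z) = (X·Y)·Z`. Hence if `D·σ(D) = σ(D)` and `D·τ(D) = τ(D)`, then
`(στ)(D) = σ(D·τ(D)) = σ(D)·(στ)(D)` and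
`D·(στ)(D) = D·(σ(D)·(στ)(D)) = (D·σ(D))·(στ)(D) = σ(D)·(στ)(D) = (στ)(D)`,
so the automorphisms `τ` with `D·τ(D) = τ(D)` are closed under composition. -/

open scoped Pointwise

theorem mulSpan_eq_closure_span (X Y : Set B) :
    mulSpan X Y = closure (Submodule.span ℂ (X * Y) : Set B) := by
  unfold mulSpan
  congr 3
  ext z
  simp [Set.mem_mul, eq_comm]

theorem mul_mem_closure_span {S T : Set B} {a b : B} (ha : a ∈ closure (Submodule.span ℂ S : Set B))
    (hb : b ∈ closure (Submodule.span ℂ T : Set B)) :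
    a * b ∈ closure (Submodule.span ℂ (S * T) : Set B) := by
  refine map_mem_closure₂ continuous_mul ha hb fun a ha b hb => ?_
  have hab := Submodule.apply_mem_map₂ (LinearMap.mul ℂ B) ha hb
  rwa [Submodule.map₂_span_span] at hab

theorem mulSpan_eq_of_subset_closure_span {S S' T T' : Set B} (hS : S ⊆ S')
    (hS' : S' ⊆ closure (Submodule.span ℂ S : Set B)) (hT : T ⊆ T')
    (hT' : T' ⊆ closure (Submodule.span ℂ T : Set B)) : mulSpan S' T' = mulSpan S T := by
  simp only [mulSpan_eq_closure_span]
  refine (closure_minimal ?_ isClosed_closure).antisymm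
    (closure_mono (Submodule.span_mono (R := ℂ) (Set.mul_subset_mul hS hT)))
  refine (Submodule.span_le (p := (Submodule.span ℂ (S * T)).topologicalClosure)).2 ?_
  rintro _ ⟨a, ha, b, hb, rfl⟩
  exact mul_mem_closure_span (hS' ha) (hT' hb)

theorem mulSpan_assoc (X Y Z : Set B) :
    mulSpan (mulSpan X Y) Z = mulSpan X (mulSpan Y Z) := by
  have hspan (S : Set B) : S ⊆ closure (Submodule.span ℂ S : Set B) :=
    Submodule.subset_span.trans subset_closure
  have hmul (X Y : Set B) : X * Y ⊆ mulSpan X Y := (mulSpan_eq_closure_span X Y) ▸ hspan _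
  calc mulSpan (mulSpan X Y) Z = mulSpan (X * Y) Z :=
        mulSpan_eq_of_subset_closure_span (hmul X Y) (mulSpan_eq_closure_span X Y).subset
          subset_rfl (hspan Z)
    _ = mulSpan X (Y * Z) := by simp only [mulSpan_eq_closure_span, mul_assoc]
    _ = mulSpan X (mulSpan Y Z) :=
        (mulSpan_eq_of_subset_closure_span subset_rfl (hspan X) (hmul Y Z)
          (mulSpan_eq_closure_span Y Z).subset).symm

theorem image_mulSpan (σ : B ≃⋆ₐ[ℂ] B) (X Y : Set B) :
    ⇑σ '' mulSpan X Y = mulSpan (⇑σ '' X) (⇑σ '' Y) := by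
  have hσ : Topology.IsClosedEmbedding σ :=
    (NonUnitalStarAlgHom.isometry σ σ.injective).isClosedEmbedding
  have hspan : ⇑σ '' (Submodule.span ℂ (X * Y) : Set B) = Submodule.span ℂ (⇑σ '' (X * Y)) :=
    congrArg SetLike.coe (Submodule.span_image (LinearMapClass.linearMap σ)).symm
  rw [mulSpan_eq_closure_span, mulSpan_eq_closure_span, ← hσ.closure_image_eq, hspan,
    Set.image_mul]

theorem mulSpan_image_mul {D : Set B} {σ τ : B ≃⋆ₐ[ℂ] B}
    (hσ : mulSpan D (⇑σ '' D) = ⇑σ '' D) (hτ : mulSpan D (⇑τ '' D) = ⇑τ '' D) :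
    mulSpan D (⇑(σ * τ) '' D) = ⇑(σ * τ) '' D := by
  have hστ : ⇑(σ * τ) '' D = mulSpan (⇑σ '' D) (⇑(σ * τ) '' D) := by
    rw [show ⇑(σ * τ) '' D = ⇑σ '' (⇑τ '' D) from (Set.image_image σ τ D).symm, ← image_mulSpan,
      hτ]
  calc mulSpan D (⇑(σ * τ) '' D) = mulSpan (mulSpan D (⇑σ '' D)) (⇑(σ * τ) '' D) := by
        rw [mulSpan_assoc, ← hστ]
    _ = ⇑(σ * τ) '' D := by rw [hσ, ← hστ]

theorem stmt_7_general (σ : B ≃⋆ₐ[ℂ] B) (D : NonUnitalStarSubalgebra ℂ B) :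
    mulSpan (D : Set B) (⇑σ '' (D : Set B)) = ⇑σ '' (D : Set B) ↔
      ∀ n : ℤ, 1 ≤ n →
        mulSpan (D : Set B) (⇑(σ ^ n) '' (D : Set B)) = ⇑(σ ^ n) '' (D : Set B) := by
  refine ⟨fun h n hn => ?_, fun h => by simpa using h 1 le_rfl⟩
  induction n, hn using Int.leInduction with
  | base => simpa using h
  | succ n _ ih => simpa only [zpow_add_one] using mulSpan_image_mul ih h

/-- `D·σ(D) = σ(D)` iff `D·σⁿ(D) = σⁿ(D)` for all `n ≥ 1`. -/
theorem stmt_7 (σ : B ≃⋆ₐ[ℂ] B) (D : NonUnitalStarSubalgebra ℂ B)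
    (hD : IsClosed (D : Set B)) :
    mulSpan (D : Set B) (⇑σ '' (D : Set B)) = ⇑σ '' (D : Set B) ↔
      ∀ n : ℤ, 1 ≤ n →
        mulSpan (D : Set B) (⇑(σ ^ n) '' (D : Set B)) = ⇑(σ ^ n) '' (D : Set B) :=
  stmt_7_general σ D

end
end

section
/- Let (B, σ, D) be a Harnisch–Kirchberg system. Then for all integers k₁ ≤ k₂ < k₃ one has D_{k₁,k₂} ∩ D_{k₂+1,k₃} = {0}. -/
/-!
Write `S j = σ^j(D)`. From `D·σ(D) = σ(D)` one gets `S i · S j ⊆ S j` for `i < j`, and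
`S (j+1) ⊆ closure (span (S j · S (j+1)))`, so an element annihilating `S a` from the left
annihilates every `S j` with `j ≥ a`. Together with `D ∩ σ(D) = 0` and nondegeneracy this gives
`S i ∩ S j = 0` for `i ≠ j`. Now suppose `d ∈ S k` equals `f_a + u`, where `f_a ∈ S a` with
`k < a` and `u` is a sum of elements of higher levels. Multiplying on the right by `S a` and
inducting on the number of summands shows that `u` annihilates `S a`, hence all the levels of its
own summands, so `u u⋆ = 0` and `u = 0`; then `d = f_a` lies in two levels and vanishes. Hence the
`S j` are independent subspaces, and `D_{k₁,k₂}` and `D_{k₂+1,k₃}` are sums over disjoint sets of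
levels.
-/

noncomputable section

variable {B : Type*} [NonUnitalCStarAlgebra B]

theorem image_mulSpan_subset {F : Type*} [FunLike F B B] [NonUnitalAlgHomClass F ℂ B B] (φ : F)
    (hφ : Continuous φ) (X Y : Set B) :
    φ '' mulSpan X Y ⊆ mulSpan (φ '' X) (φ '' Y) := by
  refine (image_closure_subset_closure_image hφ).trans (closure_mono ?_)
  refine (Submodule.image_span_subset_span (φ : B →ₗ[ℂ] B) _).trans (Submodule.span_mono ?_)
  rintro _ ⟨_, ⟨x, hx, y, hy, rfl⟩, rfl⟩
  exact ⟨φ x, ⟨x, hx, rfl⟩, φ y, ⟨y, hy, rfl⟩, map_mul φ x y⟩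

theorem mul_mem_of_mem_mulSpan {X Y : Set B} {T : Submodule ℂ B} (hT : IsClosed (T : Set B))
    {u : B} (h : ∀ x ∈ X, ∀ y ∈ Y, u * (x * y) ∈ T) {z : B} (hz : z ∈ mulSpan X Y) :
    u * z ∈ T := by
  have hspan : Submodule.span ℂ {z : B | ∃ x ∈ X, ∃ y ∈ Y, z = x * y} ≤
      T.comap (LinearMap.mulLeft ℂ u) := by
    rw [Submodule.span_le]
    rintro _ ⟨x, hx, y, hy, rfl⟩
    exact h x hx y hy
  exact closure_minimal hspan (hT.preimage (continuous_const_mul u)) hz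

def IsCStarSubset.toNonUnitalStarSubalgebra {D : Set B} (hD : IsCStarSubset D) :
    NonUnitalStarSubalgebra ℂ B where
  carrier := D
  add_mem' ha hb := hD.2.2.1 _ ha _ hb
  zero_mem' := hD.2.1
  mul_mem' ha hb := hD.2.2.2.2.1 _ ha _ hb
  smul_mem' c _ hx := hD.2.2.2.1 c _ hx
  star_mem' ha := hD.2.2.2.2.2 _ ha

namespace HarnischKirchberg

open Finset

variable {σ : B ≃⋆ₐ[ℂ] B} {A : NonUnitalStarSubalgebra ℂ B}

theorem zpow_apply_mem_map_zpow {i j k : ℤ} (h : i + j = k) {x : B} (hx : x ∈ A.map (σ ^ j)) :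
    (σ ^ i) x ∈ A.map (σ ^ k) := by
  obtain ⟨a, ha, rfl⟩ := hx
  exact ⟨a, ha, by rw [← h, zpow_add]; rfl⟩

theorem mem_map_zpow_zero {x : B} : x ∈ A.map (σ ^ (0 : ℤ)) ↔ x ∈ A := by
  rw [zpow_zero]
  exact ⟨fun ⟨a, ha, hax⟩ => hax ▸ ha, fun hx => ⟨x, hx, rfl⟩⟩

theorem coe_map_zpow_one : (A.map (σ ^ (1 : ℤ)) : Set B) = σ '' A := by
  rw [zpow_one]
  rfl

theorem coe_map_zpow_add_one (j : ℤ) :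
    (A.map (σ ^ (j + 1)) : Set B) = ⇑(σ ^ j) '' (σ '' A) := by
  rw [zpow_add_one, Set.image_image]
  rfl

variable (σ) in
theorem isClosed_map_zpow (hA : IsClosed (A : Set B)) (j : ℤ) :
    IsClosed (A.map (σ ^ j) : Set B) :=
  (StarAlgEquiv.isometry (σ ^ j)).isClosedEmbedding.isClosedMap _ hA

section Span

variable (hspan : mulSpan A (σ '' A) = σ '' A)
include hspan

theorem mul_mem_map_zpow_succ {j : ℤ} {x y : B} (hx : x ∈ A.map (σ ^ j))
    (hy : y ∈ A.map (σ ^ (j + 1))) : x * y ∈ A.map (σ ^ (j + 1)) := by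
  obtain ⟨a, ha, rfl⟩ := hx
  obtain ⟨b, hb, rfl⟩ := hy
  have hab : a * σ b ∈ A.map (σ ^ (1 : ℤ)) := by
    rw [← SetLike.mem_coe, coe_map_zpow_one, ← hspan]
    exact subset_closure (Submodule.subset_span ⟨a, ha, σ b, ⟨b, hb, rfl⟩, rfl⟩)
  convert zpow_apply_mem_map_zpow (i := j) rfl hab using 1
  rw [map_mul, zpow_add_one]
  rfl

theorem map_zpow_succ_subset_mulSpan (j : ℤ) :
    (A.map (σ ^ (j + 1)) : Set B) ⊆ mulSpan (A.map (σ ^ j)) (A.map (σ ^ (j + 1))) := by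
  rw [coe_map_zpow_add_one]
  rintro _ ⟨_, ⟨b, hb, rfl⟩, rfl⟩
  have hσb : σ b ∈ mulSpan A (σ '' A) := by
    rw [hspan]
    exact ⟨b, hb, rfl⟩
  exact image_mulSpan_subset (σ ^ j) (StarAlgEquiv.isometry _).continuous _ _ ⟨σ b, hσb, rfl⟩

theorem mul_mem_map_zpow_of_lt (hA : IsClosed (A : Set B)) {i j : ℤ} (hij : i < j) {x y : B}
    (hx : x ∈ A.map (σ ^ i)) (hy : y ∈ A.map (σ ^ j)) : x * y ∈ A.map (σ ^ j) := by
  obtain hij : i + 1 ≤ j := hij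
  induction j, hij using Int.leInduction generalizing y with
  | base => exact mul_mem_map_zpow_succ hspan hx hy
  | succ j _ ih =>
    refine mul_mem_of_mem_mulSpan (T := (A.map (σ ^ (j + 1))).toSubmodule)
      (isClosed_map_zpow σ hA _) (fun a ha b hb => ?_) (map_zpow_succ_subset_mulSpan hspan j hy)
    rw [← mul_assoc]
    exact mul_mem_map_zpow_succ hspan (ih ha) hb

theorem mul_mem_map_zpow_of_lt' (hA : IsClosed (A : Set B)) {i j : ℤ} (hij : i < j) {x y : B}
    (hx : x ∈ A.map (σ ^ i)) (hy : y ∈ A.map (σ ^ j)) : y * x ∈ A.map (σ ^ j) := by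
  simpa using star_mem (mul_mem_map_zpow_of_lt hspan hA hij (star_mem hx) (star_mem hy))

theorem mul_eq_zero_of_le {u : B} {i j : ℤ} (hij : i ≤ j) (hu : ∀ y ∈ A.map (σ ^ i), u * y = 0) :
    ∀ y ∈ A.map (σ ^ j), u * y = 0 := by
  induction j, hij using Int.leInduction with
  | base => exact hu
  | succ j _ ih =>
    intro y hy
    have hmem : u * y ∈ (⊥ : Submodule ℂ B) := by
      refine mul_mem_of_mem_mulSpan (by rw [Submodule.bot_coe]; exact isClosed_singleton)
        (fun a ha b _ => ?_) (map_zpow_succ_subset_mulSpan hspan j hy)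
      rw [← mul_assoc, ih a ha, zero_mul]
      exact zero_mem _
    exact (Submodule.mem_bot ℂ).mp hmem

theorem sum_eq_zero_of_mul_eq_zero {a : ℤ} {s : Finset ℤ} (hs : ∀ j ∈ s, a ≤ j) {f : ℤ → B}
    (hf : ∀ j ∈ s, f j ∈ A.map (σ ^ j)) (hu : ∀ y ∈ A.map (σ ^ a), (∑ j ∈ s, f j) * y = 0) :
    ∑ j ∈ s, f j = 0 := by
  rw [← CStarRing.mul_star_self_eq_zero_iff, star_sum, mul_sum]
  exact sum_eq_zero fun j hj => mul_eq_zero_of_le hspan (hs j hj) hu _ (star_mem (hf j hj))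

variable (hA : IsClosed (A : Set B)) (hinter : (A : Set B) ∩ σ '' A = {0})
  (hnondeg : ∀ d ∈ A, (∀ e ∈ A, d * σ e = 0 ∧ σ e * d = 0) → d = 0)
include hA hinter hnondeg

theorem eq_zero_of_mem_of_mem_map_zpow {j : ℤ} (hj : 1 ≤ j) {x : B} (hx : x ∈ A)
    (hxj : x ∈ A.map (σ ^ j)) : x = 0 := by
  induction j, hj using Int.leInduction generalizing x with
  | base =>
    rw [← SetLike.mem_coe, coe_map_zpow_one] at hxj
    have hx0 : x ∈ (A : Set B) ∩ σ '' A := ⟨hx, hxj⟩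
    rwa [hinter] at hx0
  | succ j hj ih =>
    have hright : ∀ y ∈ A, y ∈ A.map (σ ^ (j + 1)) → ∀ e ∈ A, y * σ e = 0 := by
      intro y hy hyj e he
      have hσe : σ e ∈ A.map (σ ^ (1 : ℤ)) := by
        rw [← SetLike.mem_coe, coe_map_zpow_one]
        exact ⟨e, he, rfl⟩
      -- `y * σ e` lies in the levels `1` and `j + 1`; `σ⁻¹` moves it to the levels `0` and `j`.
      have h1 : y * σ e ∈ A.map (σ ^ (0 + 1 : ℤ)) :=
        mul_mem_map_zpow_succ hspan (mem_map_zpow_zero.mpr hy) hσe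
      have h2 : y * σ e ∈ A.map (σ ^ (j + 1)) :=
        mul_mem_map_zpow_of_lt' hspan hA (by omega) hσe hyj
      have h0 := ih (mem_map_zpow_zero.mp (zpow_apply_mem_map_zpow (i := -1) (by ring) h1))
        (zpow_apply_mem_map_zpow (by ring) h2)
      exact (map_eq_zero_iff _ (σ ^ (-1 : ℤ)).injective).mp h0
    refine hnondeg x hx fun e he => ⟨hright x hx hxj e he, ?_⟩
    have h := hright (star x) (star_mem hx) (star_mem hxj) (star e) (star_mem he)
    simpa [map_star] using congrArg star h

theorem eq_zero_of_mem_map_zpow_of_lt {i j : ℤ} (hij : i < j) {x : B}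
    (hi : x ∈ A.map (σ ^ i)) (hj : x ∈ A.map (σ ^ j)) : x = 0 := by
  have h := eq_zero_of_mem_of_mem_map_zpow hspan hA hinter hnondeg (j := j - i) (by omega)
    (mem_map_zpow_zero.mp (zpow_apply_mem_map_zpow (i := -i) (by ring) hi))
    (zpow_apply_mem_map_zpow (by ring) hj)
  exact (map_eq_zero_iff _ (σ ^ (-i)).injective).mp h

theorem sum_eq_zero_of_sum_mem_map_zpow {s : Finset ℤ} {k : ℤ} (hk : ∀ j ∈ s, k < j)
    {f : ℤ → B} (hf : ∀ j ∈ s, f j ∈ A.map (σ ^ j)) (hsum : ∑ j ∈ s, f j ∈ A.map (σ ^ k)) :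
    ∑ j ∈ s, f j = 0 := by
  induction s using Finset.induction_on_min generalizing k f with
  | empty => simp
  | insert a s has ih =>
    have ha : a ∉ s := fun h => lt_irrefl a (has a h)
    rw [sum_insert ha] at hsum ⊢
    have hfa := hf a (mem_insert_self a s)
    have hka := hk a (mem_insert_self a s)
    have hrest : ∑ j ∈ s, f j = 0 := by
      refine sum_eq_zero_of_mul_eq_zero hspan (fun j hj => (has j hj).le)
        (fun j hj => hf j (mem_insert_of_mem hj)) fun y hy => ?_
      rw [sum_mul]
      refine ih has
        (fun j hj => mul_mem_map_zpow_of_lt' hspan hA (has j hj) hy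
          (hf j (mem_insert_of_mem hj))) ?_
      rw [← sum_mul, ← add_sub_cancel_left (f a) (∑ j ∈ s, f j), sub_mul]
      exact sub_mem (mul_mem_map_zpow_of_lt hspan hA hka hsum hy) (mul_mem hfa hy)
    rw [hrest, add_zero] at hsum ⊢
    exact eq_zero_of_mem_map_zpow_of_lt hspan hA hinter hnondeg hka hsum hfa

theorem iSupIndep_map_zpow : iSupIndep fun j : ℤ => (A.map (σ ^ j)).toSubmodule := by
  rw [iSupIndep_iff_finsetSum_eq_zero_imp_eq_zero]
  intro s
  induction s using Finset.induction_on_min with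
  | empty => simp
  | insert a s has ih =>
    intro v hv hsum
    have ha : a ∉ s := fun h => lt_irrefl a (has a h)
    rw [sum_insert ha] at hsum
    have hrest : ∑ j ∈ s, v j = 0 := by
      refine sum_eq_zero_of_sum_mem_map_zpow hspan hA hinter hnondeg has
        (fun j hj => hv j (mem_insert_of_mem hj)) ?_
      rw [eq_neg_of_add_eq_zero_right hsum]
      exact neg_mem (hv a (mem_insert_self a s))
    rw [hrest, add_zero] at hsum
    intro j hj
    rcases mem_insert.mp hj with rfl | hj
    · exact hsum
    · exact ih v (fun j hj => hv j (mem_insert_of_mem hj)) hrest j hj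

end Span

end HarnischKirchberg

theorem stmt_8_general (σ : B ≃⋆ₐ[ℂ] B) (D : Set B) (hHK : IsHKSystem σ D)
    (k₁ k₂ k₃ : ℤ) :
    Dfin σ D k₁ k₂ ∩ Dfin σ D (k₂ + 1) k₃ = {0} := by
  obtain ⟨hD, hspan, hinter, hnondeg⟩ := hHK
  let S : ℤ → Submodule ℂ B := fun j => (hD.toNonUnitalStarSubalgebra.map (σ ^ j)).toSubmodule
  have hindep : iSupIndep S := HarnischKirchberg.iSupIndep_map_zpow hspan hD.1 hinter hnondeg
  have hdisj : Disjoint (Finset.Icc (k₁ - 1) (k₂ - 1) : Set ℤ)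
      (Finset.Icc (k₂ + 1 - 1) (k₃ - 1) : Set ℤ) := by
    rw [Finset.disjoint_coe, Finset.disjoint_left]
    intro j hj₁ hj₂
    rw [Finset.mem_Icc] at hj₁ hj₂
    omega
  have hzero : ∀ k ℓ, (0 : B) ∈ Dfin σ D k ℓ := fun _ _ =>
    ⟨0, fun _ _ => ⟨0, hD.2.1, map_zero _⟩, by simp⟩
  refine Set.eq_singleton_iff_unique_mem.mpr ⟨⟨hzero _ _, hzero _ _⟩, ?_⟩
  rintro _ ⟨⟨f, hf, rfl⟩, g, hg, hfg⟩
  have hg' := Submodule.sum_mem_biSup (p := S) hg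
  rw [← hfg] at hg'
  exact Submodule.disjoint_def.mp (hindep.disjoint_biSup_biSup hdisj) _
    (Submodule.sum_mem_biSup (p := S) hf) hg'

/-- in a Harnisch–Kirchberg system, `D_{k₁,k₂} ∩ D_{k₂+1,k₃} = {0}` for
`k₁ ≤ k₂ < k₃`. -/
theorem stmt_8 (σ : B ≃⋆ₐ[ℂ] B) (D : Set B) (hHK : IsHKSystem σ D)
    (k₁ k₂ k₃ : ℤ) (h12 : k₁ ≤ k₂) (h23 : k₂ < k₃) :
    Dfin σ D k₁ k₂ ∩ Dfin σ D (k₂ + 1) k₃ = {0} :=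
  stmt_8_general σ D hHK k₁ k₂ k₃

end
end

section
/- Let A be a complex C*-algebra and φ₁, φ₂ : A → 𝓜(A) two *-homomorphisms into its multiplier algebra. Suppose that for every closed two-sided ideal J of A, the norm-closed linear span of {ι(a)·φ₁(x)·ι(b) : a, b ∈ A, x ∈ J} equals the norm-closed linear span of {ι(a)·φ₂(x)·ι(b) : a, b ∈ A, x ∈ J} (both are subsets of ι(A)). Then for every closed two-sided ideal J of A, {a ∈ A : φ₁(a) ∈ 𝓜(A, J)} = {a ∈ A : φ₂(a) ∈ 𝓜(A, J)}; that is, φ₁⁻¹(φ₁(A) ∩ 𝓜(A, J)) = φ₂⁻¹(φ₂(A) ∩ 𝓜(A, J)). -/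
open scoped MultiplierAlgebra ZeroAtInfty

noncomputable section

variable {A : Type*} [NonUnitalCStarAlgebra A]

/-- The canonical embedding of a C*-algebra into its multiplier algebra (realized as the
double centralizer algebra), as a non-unital *-homomorphism. -/
noncomputable def iota : A →⋆ₙₐ[ℂ] 𝓜(ℂ, A) := DoubleCentralizer.coeHom

/-- Closed two-sided ideal of a C*-algebra, as a predicate on subsets. -/
def IsIdealSet (J : Set A) : Prop :=
  IsClosed J ∧ (0 : A) ∈ J ∧ (∀ x ∈ J, ∀ y ∈ J, x + y ∈ J) ∧
    (∀ (c : ℂ), ∀ x ∈ J, c • x ∈ J) ∧ ∀ a : A, ∀ j ∈ J, a * j ∈ J ∧ j * a ∈ J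

/-- `𝓜(A, J) = {x ∈ 𝓜(A) : x·ι(a) ∈ ι(J) for all a ∈ A}`. -/
def MIdeal (J : Set A) : Set 𝓜(ℂ, A) :=
  {x : 𝓜(ℂ, A) | ∀ a : A, x * iota a ∈ ⇑(iota (A := A)) '' J}

/-- The norm-closed linear span of `{ι(a)·φ(x)·ι(b) : a, b ∈ A, x ∈ J}` in `𝓜(A)`. -/
def genSpan (φ : A →⋆ₙₐ[ℂ] 𝓜(ℂ, A)) (J : Set A) : Set 𝓜(ℂ, A) :=
  closure ↑(Submodule.span ℂ
    {z : 𝓜(ℂ, A) | ∃ a b : A, ∃ x ∈ J, z = iota a * φ x * iota b})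

/-! Since `m * ι(a) = ι(m.fst a)`, a multiplier lies in `𝓜(A, J)` iff `m.fst` maps `A` into `J`.
A closed ideal is recovered from its left multiples (`y ∈ J` once `A y ⊆ J`, as `e y → y` along
an approximate unit), so this holds iff `ι(a) m ι(b) ∈ ι(J)` for all `a, b`. For the closed ideal
`K = φ₁⁻¹(𝓜(A, J))` the span generated by `φ₁` on `K` lies in the closed set `ι(J)`; by
hypothesis so does the one generated by `φ₂`, which forces `φ₂(K) ⊆ 𝓜(A, J)`. -/

open scoped CStarAlgebra

lemma mem_of_forall_mul_mem {J : Set A} (hJ : IsClosed J) {y : A} (hy : ∀ a : A, a * y ∈ J) :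
    y ∈ J :=
  let _ := CStarAlgebra.spectralOrder A
  let _ := CStarAlgebra.spectralOrderedRing A
  hJ.mem_of_tendsto ((CStarAlgebra.increasingApproximateUnit A).tendsto_mul_right y)
    (.of_forall hy)

lemma eq_zero_of_forall_mul_eq_zero {d : A} (h : ∀ z : A, z * d = 0) : d = 0 :=
  (CStarRing.star_mul_self_eq_zero_iff d).mp (h _)

lemma DoubleCentralizer.fst_map_mul (m : 𝓜(ℂ, A)) (a b : A) : m.fst (a * b) = m.fst a * b := by
  rw [← sub_eq_zero]
  refine eq_zero_of_forall_mul_eq_zero fun z => ?_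
  rw [mul_sub, ← m.central, ← mul_assoc, ← mul_assoc, m.central, sub_self]

lemma mul_iota (m : 𝓜(ℂ, A)) (a : A) : m * iota a = iota (m.fst a) := by
  refine DoubleCentralizer.ext ℂ A _ _ (Prod.ext ?_ ?_) <;> ext x
  · exact m.fst_map_mul a x
  · exact m.central x a

lemma norm_iota (a : A) : ‖iota a‖ = ‖a‖ := by
  rw [← DoubleCentralizer.norm_fst]
  exact ContinuousLinearMap.opNorm_mul_apply ℂ A a

lemma isometry_iota : Isometry (iota (A := A)) :=
  AddMonoidHomClass.isometry_of_norm _ norm_iota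

lemma mem_MIdeal_iff {J : Set A} {m : 𝓜(ℂ, A)} : m ∈ MIdeal J ↔ ∀ a : A, m.fst a ∈ J := by
  simp only [MIdeal, Set.mem_ofPred_eq, mul_iota, isometry_iota.injective.mem_set_image]

lemma isClosed_MIdeal {J : Set A} (hJ : IsClosed J) : IsClosed (MIdeal J) := by
  have : MIdeal J = ⋂ a : A, (· * iota a) ⁻¹' (iota '' J) := by
    ext m
    simp [MIdeal]
  rw [this]
  exact isClosed_iInter fun a =>
    (isometry_iota.isClosedEmbedding.isClosedMap _ hJ).preimage (continuous_mul_const _)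

lemma DoubleCentralizer.fst_mem_of_mem {J : Set A} (hJ : IsIdealSet J) (m : 𝓜(ℂ, A)) {j : A}
    (hj : j ∈ J) : m.fst j ∈ J :=
  mem_of_forall_mul_mem hJ.1 fun z => by
    rw [← m.central]
    exact (hJ.2.2.2.2 _ j hj).1

lemma isIdealSet_preimage_MIdeal (φ : A →⋆ₙₐ[ℂ] 𝓜(ℂ, A)) {J : Set A} (hJ : IsIdealSet J) :
    IsIdealSet {a : A | φ a ∈ MIdeal J} := by
  have ⟨hclosed, hzero, hadd, hsmul, _⟩ := hJ
  refine ⟨(isClosed_MIdeal hclosed).preimage (map_continuous φ), ?_, ?_, ?_, ?_⟩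
  · simpa [mem_MIdeal_iff] using hzero
  · intro x hx y hy
    simp only [Set.mem_ofPred_eq, mem_MIdeal_iff] at hx hy ⊢
    simpa using fun b => hadd _ (hx b) _ (hy b)
  · intro c x hx
    simp only [Set.mem_ofPred_eq, mem_MIdeal_iff] at hx ⊢
    simpa using fun b => hsmul c _ (hx b)
  · intro a j hj
    simp only [Set.mem_ofPred_eq, mem_MIdeal_iff, map_mul, DoubleCentralizer.mul_fst] at hj ⊢
    exact ⟨fun b => (φ a).fst_mem_of_mem hJ (hj b), fun b => hj _⟩

def IsIdealSet.toSubmodule {J : Set A} (hJ : IsIdealSet J) : Submodule ℂ A where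
  carrier := J
  zero_mem' := hJ.2.1
  add_mem' := fun hx hy => hJ.2.2.1 _ hx _ hy
  smul_mem' := hJ.2.2.2.1

lemma genSpan_subset_image_iota (φ : A →⋆ₙₐ[ℂ] 𝓜(ℂ, A)) {J K : Set A} (hJ : IsIdealSet J)
    (hK : ∀ x ∈ K, φ x ∈ MIdeal J) : genSpan φ K ⊆ iota '' J := by
  have hspan : Submodule.span ℂ {z | ∃ a b : A, ∃ x ∈ K, z = iota a * φ x * iota b}
      ≤ hJ.toSubmodule.map (iota (A := A) : A →ₗ[ℂ] 𝓜(ℂ, A)) := by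
    rw [Submodule.span_le, Submodule.map_coe]
    rintro _ ⟨a, b, x, hx, rfl⟩
    rw [mul_assoc, mul_iota, ← map_mul]
    exact Set.mem_image_of_mem _ ((hJ.2.2.2.2 a _ (mem_MIdeal_iff.mp (hK x hx) b)).1)
  exact closure_minimal hspan (isometry_iota.isClosedEmbedding.isClosedMap _ hJ.1)

lemma mem_MIdeal_of_genSpan_subset {φ : A →⋆ₙₐ[ℂ] 𝓜(ℂ, A)} {J K : Set A} (hJ : IsClosed J)
    (hK : genSpan φ K ⊆ iota '' J) {x : A} (hx : x ∈ K) : φ x ∈ MIdeal J := by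
  refine mem_MIdeal_iff.mpr fun b => mem_of_forall_mul_mem hJ fun a => ?_
  have hgen : iota a * φ x * iota b ∈ genSpan φ K :=
    subset_closure (Submodule.subset_span ⟨a, b, x, hx, rfl⟩)
  have := hK hgen
  rwa [mul_assoc, mul_iota, ← map_mul, isometry_iota.injective.mem_set_image] at this

lemma preimage_MIdeal_subset {φ₁ φ₂ : A →⋆ₙₐ[ℂ] 𝓜(ℂ, A)} {J : Set A} (hJ : IsIdealSet J)
    (h : genSpan φ₁ {a | φ₁ a ∈ MIdeal J} = genSpan φ₂ {a | φ₁ a ∈ MIdeal J}) :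
    {a : A | φ₁ a ∈ MIdeal J} ⊆ {a : A | φ₂ a ∈ MIdeal J} := fun _ hx =>
  mem_MIdeal_of_genSpan_subset hJ.1 (h ▸ genSpan_subset_image_iota φ₁ hJ fun _ => id) hx

/-- if for every closed two-sided ideal `J` of `A` the closed linear spans of
`{ι(a)φ₁(x)ι(b)}` and `{ι(a)φ₂(x)ι(b)}` (with `x ∈ J`) coincide, then
`φ₁⁻¹(φ₁(A) ∩ 𝓜(A, J)) = φ₂⁻¹(φ₂(A) ∩ 𝓜(A, J))` for every such `J`. -/
theorem stmt_17 (φ₁ φ₂ : A →⋆ₙₐ[ℂ] 𝓜(ℂ, A))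
    (h : ∀ J : Set A, IsIdealSet J → genSpan φ₁ J = genSpan φ₂ J) :
    ∀ J : Set A, IsIdealSet J →
      {a : A | φ₁ a ∈ MIdeal J} = {a : A | φ₂ a ∈ MIdeal J} := fun _ hJ =>
  (preimage_MIdeal_subset hJ (h _ (isIdealSet_preimage_MIdeal φ₁ hJ))).antisymm
    (preimage_MIdeal_subset hJ (h _ (isIdealSet_preimage_MIdeal φ₂ hJ)).symm)

end
end

section
/- Let G be a second-countable, locally compact Hausdorff group, B a complex C*-algebra, and A = C₀(G, B). Let φ₁, φ₂ : A → 𝓜(A) be *-homomorphisms such that for every closed two-sided ideal J of A, {a ∈ A : φ₁(a) ∈ 𝓜(A, J)} = {a ∈ A : φ₂(a) ∈ 𝓜(A, J)}. For i ∈ {1, 2} and a closed two-sided ideal J of A, consider the conditions: (i) φᵢ(x) ∈ 𝓜(A, J) for every x ∈ J; (ii) there exists a closed two-sided ideal I of B such that J = {f ∈ A : f(g) ∈ I for all g ∈ G}; (iii) φᵢ(J) = φᵢ(A) ∩ 𝓜(A, J) as subsets of 𝓜(A). If for every closed two-sided ideal J of A the three conditions (i), (ii), (iii) are mutually equivalent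 for i = 1, then they are also mutually equivalent for i = 2. -/
open scoped MultiplierAlgebra ZeroAtInfty

noncomputable section

variable {A : Type*} [NonUnitalCStarAlgebra A]

/-!
Applied to the zero ideal, the hypothesis on preimages says `ker φ₁ = ker φ₂` (since `A` is
essential in `𝓜(A)`, `𝓜(A, 0) = 0`), so `φ₁` and `φ₂` have the same fibres. Condition (i)
only involves the preimage `φᵢ⁻¹(𝓜(A, J))`, and condition (iii) says
`φᵢ⁻¹(φᵢ(J)) = φᵢ⁻¹(𝓜(A, J))`, which depends only on that preimage and on the fibres of `φᵢ`.
Hence each of (i), (iii) holds for `φ₂` iff it holds for `φ₁`.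
-/

theorem image_eq_range_inter_iff_preimage_eq {α β : Type*} {f : α → β} {s : Set α}
    {t : Set β} : f '' s = Set.range f ∩ t ↔ f ⁻¹' (f '' s) = f ⁻¹' t := by
  refine ⟨fun h => ?_, fun h => ?_⟩
  · rw [h, Set.preimage_inter, Set.preimage_range, Set.univ_inter]
  · rw [← Set.image_preimage_eq_of_subset (Set.image_subset_range f s), h,
      Set.image_preimage_eq_range_inter]

theorem preimage_image_eq_of_forall_eq_iff {α β γ : Type*} {f : α → β} {g : α → γ}
    (hfg : ∀ a b, f a = f b ↔ g a = g b) (s : Set α) :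
    f ⁻¹' (f '' s) = g ⁻¹' (g '' s) := by
  ext a
  simp only [Set.mem_preimage, Set.mem_image, hfg]

theorem image_eq_range_inter_iff_of_forall_eq_iff {α β γ : Type*} {f : α → β} {g : α → γ}
    (hfg : ∀ a b, f a = f b ↔ g a = g b) {s : Set α} {t : Set β} {u : Set γ}
    (htu : f ⁻¹' t = g ⁻¹' u) :
    f '' s = Set.range f ∩ t ↔ g '' s = Set.range g ∩ u := by
  rw [image_eq_range_inter_iff_preimage_eq, image_eq_range_inter_iff_preimage_eq,
    preimage_image_eq_of_forall_eq_iff hfg, htu]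

theorem map_eq_map_iff_of_map_eq_zero_iff {F₁ F₂ M N₁ N₂ : Type*} [AddGroup M] [AddGroup N₁]
    [AddGroup N₂] [FunLike F₁ M N₁] [FunLike F₂ M N₂] [AddMonoidHomClass F₁ M N₁]
    [AddMonoidHomClass F₂ M N₂] {f : F₁} {g : F₂} (hfg : ∀ a, f a = 0 ↔ g a = 0) (a b : M) :
    f a = f b ↔ g a = g b := by
  rw [← sub_eq_zero, ← map_sub, hfg, map_sub, sub_eq_zero]

lemma eq_zero_of_forall_mul_iota_eq_zero {x : 𝓜(ℂ, A)} (h : ∀ a : A, x * iota a = 0) :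
    x = 0 := by
  have hsnd : x.snd = 0 := by
    ext b
    -- with `a = (x.snd b)⋆` the hypothesis becomes `x.snd b * (x.snd b)⋆ = 0`
    have hb := congr($(h (star (x.snd b))).snd b)
    simp only [iota, DoubleCentralizer.coeHom_apply, DoubleCentralizer.mul_snd,
      DoubleCentralizer.coe_snd] at hb
    simpa using hb
  rw [← norm_eq_zero, ← DoubleCentralizer.norm_snd, hsnd, norm_zero]

lemma isIdealSet_zero : IsIdealSet ({0} : Set A) := by
  refine ⟨isClosed_singleton, rfl, ?_, ?_, ?_⟩ <;> simp +contextual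

lemma mem_MIdeal_zero_iff {x : 𝓜(ℂ, A)} : x ∈ MIdeal ({0} : Set A) ↔ x = 0 := by
  refine ⟨fun hx => eq_zero_of_forall_mul_iota_eq_zero fun a => ?_, fun hx a => ⟨0, rfl, ?_⟩⟩
  · obtain ⟨j, rfl, hj⟩ := hx a
    rw [← hj, map_zero]
  · rw [hx, zero_mul, map_zero]

lemma map_eq_zero_iff_of_preimage_MIdeal_zero_eq {φ₁ φ₂ : A →⋆ₙₐ[ℂ] 𝓜(ℂ, A)}
    (h : φ₁ ⁻¹' MIdeal {0} = φ₂ ⁻¹' MIdeal {0}) (a : A) : φ₁ a = 0 ↔ φ₂ a = 0 := by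
  simpa only [Set.mem_preimage, mem_MIdeal_zero_iff] using Set.ext_iff.mp h a

theorem stmt_18_general {G : Type*} [TopologicalSpace G]
    {B : Type*} [NonUnitalCStarAlgebra B]
    (φ₁ φ₂ : C₀(G, B) →⋆ₙₐ[ℂ] 𝓜(ℂ, C₀(G, B)))
    (hpre : ∀ J : Set C₀(G, B), IsIdealSet J →
      {a : C₀(G, B) | φ₁ a ∈ MIdeal J} = {a : C₀(G, B) | φ₂ a ∈ MIdeal J})
    (h1 : ∀ J : Set C₀(G, B), IsIdealSet J →
      ((∀ x ∈ J, φ₁ x ∈ MIdeal J) ↔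
        ∃ I : Set B, IsIdealSet I ∧ J = {f : C₀(G, B) | ∀ g : G, f g ∈ I}) ∧
      ((∃ I : Set B, IsIdealSet I ∧ J = {f : C₀(G, B) | ∀ g : G, f g ∈ I}) ↔
        ⇑φ₁ '' J = Set.range ⇑φ₁ ∩ MIdeal J)) :
    ∀ J : Set C₀(G, B), IsIdealSet J →
      ((∀ x ∈ J, φ₂ x ∈ MIdeal J) ↔
        ∃ I : Set B, IsIdealSet I ∧ J = {f : C₀(G, B) | ∀ g : G, f g ∈ I}) ∧
      ((∃ I : Set B, IsIdealSet I ∧ J = {f : C₀(G, B) | ∀ g : G, f g ∈ I}) ↔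
        ⇑φ₂ '' J = Set.range ⇑φ₂ ∩ MIdeal J) := by
  have hfibers : ∀ a b, φ₁ a = φ₁ b ↔ φ₂ a = φ₂ b :=
    map_eq_map_iff_of_map_eq_zero_iff
      (map_eq_zero_iff_of_preimage_MIdeal_zero_eq (hpre {0} isIdealSet_zero))
  intro J hJ
  have hJ_pre : φ₁ ⁻¹' MIdeal J = φ₂ ⁻¹' MIdeal J := hpre J hJ
  have hi : (∀ x ∈ J, φ₂ x ∈ MIdeal J) ↔ ∀ x ∈ J, φ₁ x ∈ MIdeal J := by
    change J ⊆ φ₂ ⁻¹' MIdeal J ↔ J ⊆ φ₁ ⁻¹' MIdeal J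
    rw [hJ_pre]
  exact ⟨hi.trans (h1 J hJ).1,
    (h1 J hJ).2.trans (image_eq_range_inter_iff_of_forall_eq_iff hfibers hJ_pre)⟩

/-- transferring the equivalence of conditions (i), (ii), (iii) from `φ₁`
to `φ₂`, for `A = C₀(G, B)`. -/
theorem stmt_18 {G : Type*} [TopologicalSpace G] [Group G] [IsTopologicalGroup G]
    [LocallyCompactSpace G] [T2Space G] [SecondCountableTopology G]
    {B : Type*} [NonUnitalCStarAlgebra B]
    (φ₁ φ₂ : C₀(G, B) →⋆ₙₐ[ℂ] 𝓜(ℂ, C₀(G, B)))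
    (hpre : ∀ J : Set C₀(G, B), IsIdealSet J →
      {a : C₀(G, B) | φ₁ a ∈ MIdeal J} = {a : C₀(G, B) | φ₂ a ∈ MIdeal J})
    (h1 : ∀ J : Set C₀(G, B), IsIdealSet J →
      ((∀ x ∈ J, φ₁ x ∈ MIdeal J) ↔
        ∃ I : Set B, IsIdealSet I ∧ J = {f : C₀(G, B) | ∀ g : G, f g ∈ I}) ∧
      ((∃ I : Set B, IsIdealSet I ∧ J = {f : C₀(G, B) | ∀ g : G, f g ∈ I}) ↔
        ⇑φ₁ '' J = Set.range ⇑φ₁ ∩ MIdeal J)) :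
    ∀ J : Set C₀(G, B), IsIdealSet J →
      ((∀ x ∈ J, φ₂ x ∈ MIdeal J) ↔
        ∃ I : Set B, IsIdealSet I ∧ J = {f : C₀(G, B) | ∀ g : G, f g ∈ I}) ∧
      ((∃ I : Set B, IsIdealSet I ∧ J = {f : C₀(G, B) | ∀ g : G, f g ∈ I}) ↔
        ⇑φ₂ '' J = Set.range ⇑φ₂ ∩ MIdeal J) :=
  stmt_18_general φ₁ φ₂ hpre h1

end
end
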